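/- arXiv:1607.05420 — 3 statements merged into one kernel-verified Lean document; each statement's English description precedes it below -/
import Mathlib

section
/- The set of polynomial solutions of a shifted differential equation of order k is an F-vector space of dimension at most k. -/
/-!
Multiply the equation by `X ^ k`, so that its `i`-th term becomes
`(X ^ (k - i) * P i) * (X ^ i * g⁽ⁱ⁾)`; the operator `g ↦ X ^ i * g⁽ⁱ⁾` multiplies the coefficient
of `X ^ n` by the falling factorial `n (n - 1) ⋯ (n - i + 1)`. Let `m` be the largest degree of the
`X ^ (k - i) * P i`. For a solution `g` of degree `n`, the coefficient of `X ^ (m + n)` is then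
`Q(n) * lc g`, where `Q = ∑ᵢ [X ^ m](X ^ (k - i) * P i) · X (X - 1) ⋯ (X - i + 1)` is a nonzero
polynomial of degree at most `k` (the indicial polynomial at infinity). Hence nonzero solutions
have degrees among the at most `k` natural roots of `Q`, and taking the coefficients at these
degrees embeds the solution space into a space of dimension at most `k`.
-/

open Polynomial

/-- The linear operator `g ↦ ∑_{i=0}^k P i * g^{(i)}` associated to a shifted
differential equation with coefficients `P`. -/
noncomputable def sdeOperator {F : Type*} [Field F] {k : ℕ} (P : Fin (k + 1) → F[X]) :
    F[X] →ₗ[F] F[X] :=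
  ∑ i, (LinearMap.mulLeft F (P i)) ∘ₗ ((derivative : F[X] →ₗ[F] F[X]) ^ (i : ℕ))

namespace Polynomial

theorem exists_natDegree_le_and_coeff_ne_zero {R ι : Type*} [Semiring R] [Fintype ι]
    {A : ι → R[X]} (hA : A ≠ 0) :
    ∃ m, (∀ i, (A i).natDegree ≤ m) ∧ ∃ i, (A i).coeff m ≠ 0 := by
  classical
  obtain ⟨i₀, hi₀⟩ := Function.ne_iff.mp hA
  obtain ⟨j, hj, hmax⟩ := (Finset.univ.filter (A · ≠ 0)).exists_max_image (natDegree ∘ A)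
    ⟨i₀, by simpa using hi₀⟩
  refine ⟨(A j).natDegree, fun i => ?_, j, ?_⟩
  · by_cases hi : A i = 0
    · simp [hi]
    · exact hmax i (by simpa using hi)
  · simpa using hj

section IterateDerivative

variable {R : Type*} [CommSemiring R]

theorem coeff_X_pow_mul_iterate_derivative (g : R[X]) (i n : ℕ) :
    (X ^ i * derivative^[i] g).coeff n = n.descFactorial i * g.coeff n := by
  rw [coeff_X_pow_mul']
  split_ifs with h
  · rw [coeff_iterate_derivative, Nat.sub_add_cancel h, nsmul_eq_mul]
  · rw [Nat.descFactorial_eq_zero_iff_lt.mpr (not_le.mp h), Nat.cast_zero, zero_mul]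

theorem natDegree_X_pow_mul_iterate_derivative_le (g : R[X]) (i : ℕ) :
    (X ^ i * derivative^[i] g).natDegree ≤ g.natDegree :=
  natDegree_le_iff_coeff_eq_zero.mpr fun n hn => by
    rw [coeff_X_pow_mul_iterate_derivative, coeff_eq_zero_of_natDegree_lt hn, mul_zero]

theorem coeff_add_natDegree_sum_mul_X_pow_mul_iterate_derivative {k m : ℕ}
    (A : Fin (k + 1) → R[X]) (hA : ∀ i, (A i).natDegree ≤ m) (g : R[X]) :
    (∑ i, A i * (X ^ (i : ℕ) * derivative^[i] g)).coeff (m + g.natDegree) =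
      (∑ i, (A i).coeff m * g.natDegree.descFactorial i) * g.leadingCoeff := by
  simp only [finsetSum_coeff, Finset.sum_mul]
  refine Finset.sum_congr rfl fun i _ => ?_
  rw [coeff_mul_add_eq_of_natDegree_le (hA i) (natDegree_X_pow_mul_iterate_derivative_le g i),
    coeff_X_pow_mul_iterate_derivative, coeff_natDegree, mul_assoc]

end IterateDerivative

section DescPochhammerSum

variable {R : Type*} [CommRing R]

noncomputable def descPochhammerSum {k : ℕ} (c : Fin (k + 1) → R) : R[X] :=
  ∑ i, C (c i) * descPochhammer R i

theorem eval_natCast_descPochhammerSum {k : ℕ} (c : Fin (k + 1) → R) (n : ℕ) :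
    (descPochhammerSum c).eval (n : R) = ∑ i, c i * n.descFactorial i := by
  simp only [descPochhammerSum, eval_finsetSum, eval_mul, eval_C,
    descPochhammer_eval_eq_descFactorial]

variable [IsDomain R]

theorem natDegree_descPochhammerSum_le {k : ℕ} (c : Fin (k + 1) → R) :
    (descPochhammerSum c).natDegree ≤ k :=
  natDegree_sum_le_of_forall_le _ _ fun i _ =>
    (natDegree_C_mul_le _ _).trans ((descPochhammer_natDegree R i).trans_le i.is_le)

theorem descPochhammerSum_ne_zero {k : ℕ} {c : Fin (k + 1) → R} (hc : c ≠ 0) :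
    descPochhammerSum c ≠ 0 := by
  classical
  obtain ⟨i₀, hi₀⟩ := Function.ne_iff.mp hc
  obtain ⟨j, hj, hmax⟩ := (Finset.univ.filter (c · ≠ 0)).exists_max_image id
    ⟨i₀, by simpa using hi₀⟩
  have hj : c j ≠ 0 := by simpa using hj
  have hcoeff : (descPochhammerSum c).coeff j = c j := by
    rw [descPochhammerSum, finsetSum_coeff, Finset.sum_eq_single j]
    · have hmonic : (descPochhammer R j).coeff j = 1 := by
        simpa [descPochhammer_natDegree] using (monic_descPochhammer R (j : ℕ)).coeff_natDegree
      rw [coeff_C_mul, hmonic, mul_one]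
    · intro i _ hij
      rcases lt_or_gt_of_ne hij with hlt | hgt
      · rw [coeff_C_mul, coeff_eq_zero_of_natDegree_lt, mul_zero]
        rwa [descPochhammer_natDegree]
      · have : c i = 0 := by
          by_contra h
          exact (hmax i (by simpa using h)).not_gt hgt
        rw [this, C_0, zero_mul, coeff_zero]
    · simp
  intro h
  rw [h, coeff_zero] at hcoeff
  exact hj hcoeff.symm

end DescPochhammerSum

theorem rank_le_card_of_natDegree_mem {R : Type*} [Ring R] [StrongRankCondition R]
    (V : Submodule R R[X]) (D : Finset ℕ) (hD : ∀ g ∈ V, g ≠ 0 → g.natDegree ∈ D) :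
    Module.rank R V ≤ D.card := by
  let φ : V →ₗ[R] (D → R) := LinearMap.pi fun d => lcoeff R d ∘ₗ V.subtype
  have hφ : Function.Injective φ := by
    rw [← LinearMap.ker_eq_bot, LinearMap.ker_eq_bot']
    intro g hg
    by_contra hg₀
    have hg₀ : (g : R[X]) ≠ 0 := by simpa using hg₀
    exact leadingCoeff_ne_zero.mpr hg₀ (congrFun hg ⟨_, hD g g.2 hg₀⟩)
  calc Module.rank R V ≤ Module.rank R (D → R) := φ.rank_le_of_injective hφ
    _ = D.card := by rw [rank_fun', Fintype.card_coe]

theorem rank_le_natDegree_of_isRoot_natDegree {R : Type*} [CommRing R] [IsDomain R] [CharZero R]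
    (V : Submodule R R[X]) {Q : R[X]} (hQ : Q ≠ 0)
    (hV : ∀ g ∈ V, g ≠ 0 → Q.IsRoot (g.natDegree : R)) :
    Module.rank R V ≤ Q.natDegree := by
  classical
  set D := Q.roots.toFinset.preimage (Nat.cast : ℕ → R) Nat.cast_injective.injOn
  refine (rank_le_card_of_natDegree_mem V D fun g hg hg₀ => ?_).trans ?_
  · simpa [D, mem_roots hQ] using hV g hg hg₀
  · have hD : (D.image (Nat.cast : ℕ → R)).val ⊆ Q.roots := fun x hx => by
      obtain ⟨n, hn, rfl⟩ := Finset.mem_image.mp hx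
      simpa [D] using hn
    have := card_le_degree_of_subset_roots hD
    rw [Finset.card_image_of_injective _ Nat.cast_injective] at this
    exact_mod_cast this

end Polynomial

theorem X_pow_mul_sdeOperator_apply {F : Type*} [Field F] {k : ℕ} (P : Fin (k + 1) → F[X])
    (g : F[X]) :
    X ^ k * sdeOperator P g =
      ∑ i : Fin (k + 1), (X ^ (k - i : ℕ) * P i) * (X ^ (i : ℕ) * derivative^[i] g) := by
  simp only [sdeOperator, LinearMap.sum_apply, LinearMap.comp_apply,
    LinearMap.mulLeft_apply, Module.End.pow_apply, Finset.mul_sum]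
  refine Finset.sum_congr rfl fun i _ => ?_
  have hX : (X : F[X]) ^ k = X ^ (k - i) * X ^ (i : ℕ) := by
    rw [← pow_add, Nat.sub_add_cancel i.is_le]
  rw [hX]
  ring

theorem stmt5 {F : Type*} [Field F] [CharZero F] {k : ℕ} (P : Fin (k + 1) → F[X])
    (hP : P ≠ 0) :
    Module.rank F (LinearMap.ker (sdeOperator P)) ≤ (k : Cardinal) := by
  set A : Fin (k + 1) → F[X] := fun i => X ^ (k - i) * P i
  have hA : A ≠ 0 := fun h => hP (funext fun i => by simpa [A] using congrFun h i)
  obtain ⟨m, hm, i, hi⟩ := exists_natDegree_le_and_coeff_ne_zero hA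
  have hQ : descPochhammerSum (fun i => (A i).coeff m) ≠ 0 :=
    descPochhammerSum_ne_zero (Function.ne_iff.mpr ⟨i, hi⟩)
  refine (rank_le_natDegree_of_isRoot_natDegree _ hQ fun g hg hg₀ => ?_).trans
    (by exact_mod_cast natDegree_descPochhammerSum_le _)
  have hcoeff := coeff_add_natDegree_sum_mul_X_pow_mul_iterate_derivative A hm g
  rw [← X_pow_mul_sdeOperator_apply, LinearMap.mem_ker.mp hg, mul_zero, coeff_zero,
    ← eval_natCast_descPochhammerSum] at hcoeff
  exact (mul_eq_zero.mp hcoeff.symm).resolve_right (leadingCoeff_ne_zero.mpr hg₀)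
end

section
/- Suppose ∑_{i=1}^k α_i (x - a_i)^d = ∑_{i=1}^l β_i (x - b_i)^{e_i} in F[x], where the a_i ∈ F are distinct, the α_i are not all zero, β_i, b_i ∈ F are arbitrary, and e_i < d for every i. Then k + l > √(2(d+1)). -/
/-!
Let `p = (X - a₀)ᵈ` with `α₀ ≠ 0`. The identity puts `p` in the span of the other `k + l - 1`
shifted powers, hence in the span of a linearly independent subfamily `Pᵢ = (X - Uᵢ)^Vᵢ`, `i < q`,
whose Wronskian `W` is nonzero in characteristic zero. Entry `(i, j)` of the Wronskian matrix is a
multiple of `(X - Uᵢ)^(Vᵢ - j)`; hence `deg W ≤ ∑ Vᵢ - q(q-1)/2`, and `W` is divisible by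
`(X - u)^(∑_{Uᵢ = u} (Vᵢ - (q-1)))` for every `u`. Writing `p = ∑ cᵢ Pᵢ` and replacing some `Pᵣ`
with `cᵣ ≠ 0`, `Uᵣ ≠ a₀` by `p` multiplies `W` by `cᵣ`, which adds `d - (q-1)` to this bound at
`a₀`. Comparing the total multiplicity with the degree gives `2(d+1) ≤ q(q+1) < (k+l)²`.
-/

open Polynomial Finset Matrix

theorem Matrix.prod_dvd_det_of_forall_dvd {ι R : Type*} [Fintype ι] [DecidableEq ι]
    [CommRing R] (M : Matrix ι ι R) (g : ι → R) (h : ∀ i j, g i ∣ M i j) : ∏ i, g i ∣ M.det := by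
  choose M' hM' using h
  rw [show M = of fun i j => g i * of M' i j from Matrix.ext hM', det_mul_column]
  exact dvd_mul_right _ _

namespace Polynomial

section Wronskian

variable {R : Type*} [CommRing R] {n : ℕ}

noncomputable def wronskianMatrix (P : Fin n → R[X]) : Matrix (Fin n) (Fin n) R[X] :=
  Matrix.of fun i j => derivative^[j] (P i)

lemma vecMul_wronskianMatrix_apply (w P : Fin n → R[X]) (j : Fin n) :
    (w ᵥ* wronskianMatrix P) j = ∑ i, w i * derivative^[j] (P i) :=
  rfl

lemma wronskian_mul_mul (g a b : R[X]) : wronskian (g * a) (g * b) = g ^ 2 * wronskian a b := by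
  simp only [wronskian, derivative_mul]
  ring

lemma sum_wronskian_mul_iterate_derivative {ι : Type*} (s : Finset ι) (a : R[X]) (w P : ι → R[X])
    (j : ℕ) :
    ∑ i ∈ s, wronskian a (w i) * derivative^[j] (P i) =
      a * derivative (∑ i ∈ s, w i * derivative^[j] (P i))
        - a * ∑ i ∈ s, w i * derivative^[j + 1] (P i)
        - derivative a * ∑ i ∈ s, w i * derivative^[j] (P i) := by
  simp only [derivative_sum, derivative_mul, Function.iterate_succ_apply', Finset.mul_sum,
    ← Finset.sum_sub_distrib]
  refine Finset.sum_congr rfl fun i _ => ?_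
  rw [wronskian]
  ring

lemma vecMul_wronskianMatrix_comp_castSucc {P w : Fin (n + 1) → R[X]}
    (hw : w ᵥ* wronskianMatrix P = 0) :
    (fun i => wronskian (w (Fin.last n)) (w i.castSucc)) ᵥ* wronskianMatrix (P ∘ Fin.castSucc)
      = 0 := by
  funext j
  have hj := congrFun hw j.castSucc
  have hj' := congrFun hw j.succ
  have key := sum_wronskian_mul_iterate_derivative univ (w (Fin.last n)) w P j
  rw [Fin.sum_univ_castSucc, wronskian_self_eq_zero, zero_mul, add_zero] at key
  simp only [vecMul_wronskianMatrix_apply, Fin.val_castSucc, Fin.val_succ, Function.comp_apply,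
    Pi.zero_apply] at hj hj' ⊢
  rw [key, hj, hj']
  simp

end Wronskian

section CharZero

variable {F : Type*} [Field F] [CharZero F] {n : ℕ}

lemma exists_eq_C_mul_of_wronskian_eq_zero {s p : F[X]} (hs : s ≠ 0) (h : wronskian s p = 0) :
    ∃ c : F, p = C c * s := by
  classical
  obtain ⟨g, p', s', rfl, rfl, hcop⟩ : ∃ g p' s', p = g * p' ∧ s = g * s' ∧ IsCoprime p' s' :=
    ⟨gcd p s, p / gcd p s, s / gcd p s,
      (EuclideanDomain.mul_div_cancel' (gcd_ne_zero_of_right hs) (gcd_dvd_left p s)).symm,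
      (EuclideanDomain.mul_div_cancel' (gcd_ne_zero_of_right hs) (gcd_dvd_right p s)).symm,
      isCoprime_div_gcd_div_gcd hs⟩
  have hg : g ≠ 0 := left_ne_zero_of_mul hs
  rw [wronskian_mul_mul, mul_eq_zero, or_iff_right (pow_ne_zero 2 hg),
    hcop.symm.wronskian_eq_zero_iff, derivative_eq_zero, derivative_eq_zero] at h
  rw [eq_C_of_natDegree_eq_zero h.1] at hs ⊢
  rw [eq_C_of_natDegree_eq_zero h.2]
  have hs' : s'.coeff 0 ≠ 0 := fun h0 => hs (by rw [h0, C_0, mul_zero])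
  refine ⟨p'.coeff 0 / s'.coeff 0, ?_⟩
  rw [mul_left_comm, ← C_mul, div_mul_cancel₀ _ hs']

lemma last_mem_span_of_det_wronskianMatrix_eq_zero {P : Fin (n + 1) → F[X]}
    (hP : (wronskianMatrix (P ∘ Fin.castSucc)).det ≠ 0) (h : (wronskianMatrix P).det = 0) :
    P (Fin.last n) ∈ Submodule.span F (Set.range (P ∘ Fin.castSucc)) := by
  have hker : ∀ v, v ᵥ* wronskianMatrix (P ∘ Fin.castSucc) = 0 → v = 0 := fun v hv =>
    by_contra fun hv0 => hP (exists_vecMul_eq_zero_iff.mp ⟨v, hv0, hv⟩)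
  obtain ⟨w, hw0, hw⟩ := exists_vecMul_eq_zero_iff.mpr h
  have hrow : ∀ j : Fin (n + 1), ∑ i : Fin n, w i.castSucc * derivative^[j] (P i.castSucc)
      + w (Fin.last n) * derivative^[j] (P (Fin.last n)) = 0 := fun j => by
    rw [← Fin.sum_univ_castSucc (fun i => w i * derivative^[j] (P i)),
      ← vecMul_wronskianMatrix_apply, hw, Pi.zero_apply]
  have hlast : w (Fin.last n) ≠ 0 := by
    intro h0
    have hinit : w ∘ Fin.castSucc = 0 := hker _ <| by
      ext j : 1
      simpa [vecMul_wronskianMatrix_apply, h0] using hrow j.castSucc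
    refine hw0 (_root_.funext fun i => ?_)
    induction i using Fin.lastCases with
    | last => exact h0
    | cast i => exact congrFun hinit i
  -- The Wronskians `W(w_last, w_i)` form a kernel vector of the smaller matrix, so they vanish and
  -- every `w_i` is a constant multiple of `w_last`.
  choose c hc using fun i => exists_eq_C_mul_of_wronskian_eq_zero hlast
    (congrFun (hker _ (vecMul_wronskianMatrix_comp_castSucc hw)) i)
  refine (Submodule.mem_span_range_iff_exists_fun F).mpr ⟨-c, mul_left_cancel₀ hlast ?_⟩
  have hsum : ∑ i : Fin n, w i.castSucc * P i.castSucc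
      = w (Fin.last n) * ∑ i, c i • P i.castSucc := by
    simp only [Finset.mul_sum, hc, smul_eq_C_mul]
    exact Finset.sum_congr rfl fun i _ => by ring
  have h0 := hrow 0
  simp only [Fin.val_zero, Function.iterate_zero, id_eq, hsum] at h0
  simp only [Pi.neg_apply, neg_smul, Finset.sum_neg_distrib, Function.comp_apply]
  linear_combination -h0

theorem det_wronskianMatrix_ne_zero_of_linearIndependent {P : Fin n → F[X]}
    (hP : LinearIndependent F P) : (wronskianMatrix P).det ≠ 0 := by
  induction n with
  | zero => simp
  | succ n ih =>
    intro h
    have hmem := last_mem_span_of_det_wronskianMatrix_eq_zero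
      (ih (hP.comp _ (Fin.castSucc_injective n))) h
    rw [Set.range_comp] at hmem
    exact hP.notMem_span_image (s := Set.range Fin.castSucc)
      (fun ⟨i, hi⟩ => (Fin.castSucc_lt_last i).ne hi) hmem

end CharZero

section ShiftedPowers

variable {R : Type*} [CommRing R] {n : ℕ}

lemma wronskianMatrix_X_sub_C_pow_apply (U : Fin n → R) (V : Fin n → ℕ) (i j : Fin n) :
    wronskianMatrix (fun i => (X - C (U i)) ^ V i) i j
      = (V i).descFactorial j • (X - C (U i)) ^ (V i - j) :=
  iterate_derivative_X_sub_pow _ _ _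

lemma natDegree_det_add_sum_le {M : Matrix (Fin n) (Fin n) R[X]} (V : Fin n → ℕ)
    (hM : ∀ i j, M i j ≠ 0 → (M i j).natDegree + j ≤ V i) (h : M.det ≠ 0) :
    M.det.natDegree + ∑ j : Fin n, (j : ℕ) ≤ ∑ i, V i := by
  have hterm : ∀ σ : Equiv.Perm (Fin n), ∏ j, M (σ j) j ≠ 0 →
      (∏ j, M (σ j) j).natDegree + ∑ j : Fin n, (j : ℕ) ≤ ∑ i, V i := fun σ hσ =>
    calc (∏ j, M (σ j) j).natDegree + ∑ j : Fin n, (j : ℕ)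
        ≤ ∑ j, ((M (σ j) j).natDegree + j) := by
          rw [sum_add_distrib]
          exact Nat.add_le_add_right (natDegree_prod_le _ _) _
      _ ≤ ∑ j, V (σ j) := sum_le_sum fun j _ => hM _ _ fun h0 => hσ (prod_eq_zero (mem_univ j) h0)
      _ = ∑ i, V i := Equiv.sum_comp σ V
  rw [det_apply] at h ⊢
  obtain ⟨σ, -, hσ⟩ := exists_ne_zero_of_sum_ne_zero h
  have hσ_le := hterm σ fun h0 => hσ (by rw [h0, smul_zero])
  have hsum : (∑ σ : Equiv.Perm (Fin n), Equiv.Perm.sign σ • ∏ j, M (σ j) j).natDegree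
      ≤ ∑ i, V i - ∑ j : Fin n, (j : ℕ) := by
    refine natDegree_sum_le_of_forall_le _ _ fun τ _ => ?_
    rw [Units.smul_def]
    refine (natDegree_smul_le _ _).trans ?_
    by_cases hτ : ∏ j, M (τ j) j = 0
    · simp [hτ]
    · have := hterm τ hτ
      omega
  omega

lemma natDegree_det_wronskianMatrix_X_sub_C_pow_add_le (U : Fin n → R) (V : Fin n → ℕ)
    (h : (wronskianMatrix fun i => (X - C (U i)) ^ V i).det ≠ 0) :
    (wronskianMatrix fun i => (X - C (U i)) ^ V i).det.natDegree + ∑ j : Fin n, (j : ℕ)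
      ≤ ∑ i, V i := by
  refine natDegree_det_add_sum_le V (fun i j hij => ?_) h
  rw [wronskianMatrix_X_sub_C_pow_apply] at hij ⊢
  have hj : (j : ℕ) ≤ V i := by
    by_contra hlt
    rw [Nat.descFactorial_eq_zero_iff_lt.mpr (by omega), zero_smul] at hij
    exact hij rfl
  have := (natDegree_smul_le ((V i).descFactorial j) ((X - C (U i)) ^ (V i - j))).trans
    (natDegree_pow_le_of_le _ (natDegree_X_sub_C_le _))
  omega

lemma X_sub_C_pow_sum_dvd_det_wronskianMatrix [DecidableEq R] (U : Fin n → R) (V : Fin n → ℕ)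
    (u : R) :
    (X - C u) ^ (∑ i with U i = u, (V i - (n - 1)))
      ∣ (wronskianMatrix fun i => (X - C (U i)) ^ V i).det := by
  rw [← prod_pow_eq_pow_sum, prod_filter]
  refine Matrix.prod_dvd_det_of_forall_dvd _ _ fun i j => ?_
  split_ifs with hi
  · rw [wronskianMatrix_X_sub_C_pow_apply, hi, nsmul_eq_mul]
    exact dvd_mul_of_dvd_right (pow_dvd_pow _ (by omega)) _
  · exact one_dvd _

lemma det_wronskianMatrix_update_sum [DecidableEq R] (P : Fin n → R[X]) (c : Fin n → R)
    (j : Fin n) :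
    (wronskianMatrix (Function.update P j (∑ i, c i • P i))).det
      = C (c j) * (wronskianMatrix P).det := by
  have hrow : wronskianMatrix (Function.update P j (∑ i, c i • P i))
      = (wronskianMatrix P).updateRow j (∑ i, C (c i) • wronskianMatrix P i) := by
    ext i k : 2
    rcases eq_or_ne i j with rfl | hij
    · simp [wronskianMatrix, iterate_derivative_sum, smul_eq_C_mul]
    · simp [wronskianMatrix, hij]
  rw [hrow, det_updateRow_sum, smul_eq_mul]

end ShiftedPowers

section Field

variable {F : Type*} [Field F] {n : ℕ}

lemma sum_le_natDegree_of_X_sub_C_pow_dvd {p : F[X]} (hp : p ≠ 0) (s : Finset F) (m : F → ℕ)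
    (h : ∀ u ∈ s, (X - C u) ^ m u ∣ p) : ∑ u ∈ s, m u ≤ p.natDegree := by
  have hcop : (s : Set F).Pairwise (Function.onFun IsCoprime fun u => (X - C u) ^ m u) :=
    fun u _ v _ huv => (pairwise_coprime_X_sub_C Function.injective_id huv).pow
  calc ∑ u ∈ s, m u = ∑ u ∈ s, ((X - C u) ^ m u).natDegree := by
        simp only [natDegree_pow, natDegree_X_sub_C, mul_one]
    _ = (∏ u ∈ s, (X - C u) ^ m u).natDegree :=
        (natDegree_prod _ _ fun u _ => pow_ne_zero _ (X_sub_C_ne_zero u)).symm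
    _ ≤ p.natDegree := natDegree_le_of_dvd (prod_dvd_of_coprime hcop h) hp

lemma exists_ne_of_sum_eq_X_sub_C_pow [CharZero F] {U : Fin n → F} {V : Fin n → ℕ} {A : F}
    {D : ℕ} (hne : ∀ i, (U i, V i) ≠ (A, D)) {c : Fin n → F}
    (hc : ∑ i, c i • (X - C (U i)) ^ V i = (X - C A) ^ D) : ∃ j, c j ≠ 0 ∧ U j ≠ A := by
  by_contra! hcon
  have hD := congrArg (fun p => (derivative^[D] p).eval A) hc
  simp only [iterate_derivative_sum, iterate_derivative_smul, iterate_derivative_X_sub_pow_self,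
    eval_finsetSum, eval_smul, eval_natCast] at hD
  refine Nat.cast_ne_zero.mpr (Nat.factorial_ne_zero D) (hD.symm.trans (sum_eq_zero ?_))
  intro i _
  rcases eq_or_ne (c i) 0 with hci | hci
  · rw [hci, zero_smul]
  rw [iterate_derivative_X_sub_pow, hcon i hci, eval_smul, eval_pow, eval_sub, eval_X, eval_C,
    sub_self]
  have hVD : V i ≠ D := fun h => hne i (by rw [hcon i hci, h])
  rcases hVD.lt_or_gt with hlt | hgt
  · rw [Nat.descFactorial_eq_zero_iff_lt.mpr hlt, zero_smul, smul_zero]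
  · rw [zero_pow (by omega), smul_zero, smul_zero]

lemma X_sub_C_pow_dvd_det_wronskianMatrix_of_sum_eq [DecidableEq F] {U : Fin n → F}
    {V : Fin n → ℕ} {A : F} {D : ℕ} {c : Fin n → F}
    (hc : ∑ i, c i • (X - C (U i)) ^ V i = (X - C A) ^ D) {j : Fin n} (hcj : c j ≠ 0)
    (hUj : U j ≠ A) :
    (X - C A) ^ (D - (n - 1) + ∑ i with U i = A, (V i - (n - 1)))
      ∣ (wronskianMatrix fun i => (X - C (U i)) ^ V i).det := by
  have hupdate : Function.update (fun i => (X - C (U i)) ^ V i) j ((X - C A) ^ D)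
      = fun i => (X - C (Function.update U j A i)) ^ Function.update V j D i := by
    ext1 i
    rcases eq_or_ne i j with rfl | hij <;> simp [*]
  have hfilter : univ.filter (fun i => Function.update U j A i = A)
      = insert j (univ.filter fun i => U i = A) := by
    ext i
    rcases eq_or_ne i j with rfl | hij <;> simp [*]
  have hdvd := X_sub_C_pow_sum_dvd_det_wronskianMatrix (Function.update U j A)
    (Function.update V j D) A
  rw [← hupdate, ← hc, det_wronskianMatrix_update_sum, hfilter,
    sum_insert (by simpa using hUj), Function.update_self] at hdvd
  rw [sum_congr rfl fun i hi => by
    rw [Function.update_of_ne (ne_of_mem_of_not_mem hi (by simpa using hUj))]] at hdvd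
  exact (IsUnit.dvd_mul_left (isUnit_C.mpr hcj.isUnit)).mp hdvd

end Field

section Main

variable {F : Type*} [Field F] [CharZero F]

theorem two_mul_succ_le_of_sum_eq_X_sub_C_pow {n : ℕ} {U : Fin n → F} {V : Fin n → ℕ} {A : F}
    {D : ℕ} (hne : ∀ i, (U i, V i) ≠ (A, D)) {c : Fin n → F}
    (hc : ∑ i, c i • (X - C (U i)) ^ V i = (X - C A) ^ D)
    (hW : (wronskianMatrix fun i => (X - C (U i)) ^ V i).det ≠ 0) :
    2 * (D + 1) ≤ n * (n + 1) := by
  classical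
  obtain ⟨j, hcj, hUj⟩ := exists_ne_of_sum_eq_X_sub_C_pow hne hc
  let m : F → ℕ := fun u => ∑ i with U i = u, (V i - (n - 1)) + if u = A then D - (n - 1) else 0
  have hdvd : ∀ u ∈ insert A (univ.image U), (X - C u) ^ m u
      ∣ (wronskianMatrix fun i => (X - C (U i)) ^ V i).det := by
    intro u _
    rcases eq_or_ne u A with rfl | hu
    · simpa [m, add_comm] using X_sub_C_pow_dvd_det_wronskianMatrix_of_sum_eq hc hcj hUj
    · simpa [m, hu] using X_sub_C_pow_sum_dvd_det_wronskianMatrix U V u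
  have hm : ∑ u ∈ insert A (univ.image U), m u = ∑ i, (V i - (n - 1)) + (D - (n - 1)) := by
    rw [sum_add_distrib, sum_fiberwise_of_maps_to fun i _ => mem_insert_of_mem
      (mem_image_of_mem U (mem_univ i)), sum_ite_eq', if_pos (mem_insert_self _ _)]
  have hroots := sum_le_natDegree_of_X_sub_C_pow_dvd hW _ m hdvd
  have hdeg := natDegree_det_wronskianMatrix_X_sub_C_pow_add_le U V hW
  have hV : ∑ i, V i ≤ ∑ i, (V i - (n - 1)) + n * (n - 1) :=
    calc ∑ i, V i ≤ ∑ i, ((V i - (n - 1)) + (n - 1)) := sum_le_sum fun i _ => le_tsub_add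
      _ = _ := by rw [sum_add_distrib, sum_const, card_univ, Fintype.card_fin, smul_eq_mul]
  have hgauss : (∑ j : Fin n, (j : ℕ)) * 2 = n * (n - 1) := by
    rw [Fin.sum_univ_eq_sum_range (fun j => j), sum_range_id_mul_two]
  have hn : n * (n + 1) = n * (n - 1) + 2 * n := by
    obtain ⟨n, rfl⟩ : ∃ k, n = k + 1 := ⟨n - 1, by have := j.pos; omega⟩
    simp only [Nat.add_sub_cancel]
    ring
  have hpos := j.pos
  generalize n * (n - 1) = N at *
  omega

theorem two_mul_succ_le_of_X_sub_C_pow_mem_span {ι : Type*} [Fintype ι] (U : ι → F) (V : ι → ℕ)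
    {A : F} {D : ℕ} (hne : ∀ x, (U x, V x) ≠ (A, D))
    (hmem : (X - C A) ^ D ∈ Submodule.span F (Set.range fun x => (X - C (U x)) ^ V x)) :
    2 * (D + 1) ≤ Fintype.card ι * (Fintype.card ι + 1) := by
  obtain ⟨κ, τ, hτ, hspan, hli⟩ := exists_linearIndependent' F fun x => (X - C (U x)) ^ V x
  have : Finite κ := Finite.of_injective τ hτ
  let e := Finite.equivFin κ
  have hq : Nat.card κ ≤ Fintype.card ι := by
    simpa using Nat.card_le_card_of_injective τ hτ
  rw [← hspan, ← e.symm.surjective.range_comp] at hmem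
  obtain ⟨c, hc⟩ := (Submodule.mem_span_range_iff_exists_fun F).mp hmem
  have hW := det_wronskianMatrix_ne_zero_of_linearIndependent (hli.comp e.symm e.symm.injective)
  exact (two_mul_succ_le_of_sum_eq_X_sub_C_pow (U := U ∘ τ ∘ e.symm) (V := V ∘ τ ∘ e.symm)
    (fun i => hne _) hc hW).trans (Nat.mul_le_mul hq (by omega))

end Main

end Polynomial

theorem stmt8_general {F : Type*} [Field F] [CharZero F] {d k l : ℕ}
    (α a : Fin k → F) (ha : Function.Injective a) (hα : α ≠ 0)
    (β b : Fin l → F) (e : Fin l → ℕ) (he : ∀ i, e i < d)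
    (heq : ∑ i, C (α i) * (X - C (a i)) ^ d = ∑ i, C (β i) * (X - C (b i)) ^ e i) :
    Real.sqrt (2 * (d + 1)) < (k : ℝ) + l := by
  obtain ⟨i₀, hi₀⟩ := Function.ne_iff.mp hα
  let U : {i // i ≠ i₀} ⊕ Fin l → F := Sum.elim (fun i => a i) b
  let V : {i // i ≠ i₀} ⊕ Fin l → ℕ := Sum.elim (fun _ => d) e
  have hne : ∀ x, (U x, V x) ≠ (a i₀, d) := by
    rintro (⟨i, hi⟩ | j) h <;> simp only [U, V, Sum.elim_inl, Sum.elim_inr, Prod.mk.injEq] at h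
    · exact hi (ha h.1)
    · exact (he j).ne h.2
  have hmem : (X - C (a i₀)) ^ d ∈ Submodule.span F (Set.range fun x => (X - C (U x)) ^ V x) := by
    have hsmul : α i₀ • (X - C (a i₀)) ^ d = ∑ j, β j • (X - C (b j)) ^ e j
        - ∑ i ∈ univ.erase i₀, α i • (X - C (a i)) ^ d := by
      simp only [smul_eq_C_mul]
      rw [← heq, ← add_sum_erase _ _ (mem_univ i₀)]
      ring
    refine (Submodule.smul_mem_iff _ hi₀).mp (hsmul ▸ sub_mem (sum_mem fun j _ => ?_)
      (sum_mem fun i hi => ?_))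
    · exact Submodule.smul_mem _ _ (Submodule.subset_span ⟨Sum.inr j, rfl⟩)
    · exact Submodule.smul_mem _ _ (Submodule.subset_span ⟨Sum.inl ⟨i, ne_of_mem_erase hi⟩, rfl⟩)
  have hbound := two_mul_succ_le_of_X_sub_C_pow_mem_span U V hne hmem
  have hcard : Fintype.card ({i // i ≠ i₀} ⊕ Fin l) + 1 = k + l := by
    simp only [Fintype.card_sum, Fintype.card_subtype_compl, Fintype.card_fin,
      Fintype.card_unique]
    have := i₀.pos
    omega
  rw [Real.sqrt_lt' (by exact_mod_cast (show 0 < k + l by omega))]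
  exact_mod_cast (by nlinarith : 2 * (d + 1) < (k + l) ^ 2)

theorem stmt8 {F : Type*} [Field F] [CharZero F] {d k l : ℕ} (hd : 0 < d)
    (α a : Fin k → F) (ha : Function.Injective a) (hα : α ≠ 0)
    (β b : Fin l → F) (e : Fin l → ℕ) (he : ∀ i, e i < d)
    (heq : ∑ i, C (α i) * (X - C (a i)) ^ d = ∑ i, C (β i) * (X - C (b i)) ^ e i) :
    Real.sqrt (2 * (d + 1)) < (k : ℝ) + l :=
  stmt8_general α a ha hα β b e he heq
end

section
/- Let f ∈ ℝ[x] have degree d ≥ 1. Either f = α(x - a)^d for some α, a ∈ ℝ, or Waring_ℝ(f) + Sparsest_ℝ(f) ≥ (d + 3)/2. -/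
open Polynomial

/-- The Waring rank of a univariate polynomial `f` of degree `d`: the least `s` such that
`f = ∑_{i=1}^s α_i (x - a_i)^d`. -/
noncomputable def waringRank {F : Type*} [Field F] (f : F[X]) : ℕ :=
  sInf {s | ∃ α a : Fin s → F, f = ∑ i, C (α i) * (X - C (a i)) ^ f.natDegree}

/-- The sparsest shift complexity of `f`: the least `s` such that
`f = ∑_{i=1}^s α_i (x - a)^{e_i}` for a single shift `a`. -/
noncomputable def sparsestShift {F : Type*} [Field F] (f : F[X]) : ℕ :=
  sInf {s | ∃ (α : Fin s → F) (c : F) (e : Fin s → ℕ), f = ∑ i, C (α i) * (X - C c) ^ e i}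

/-!
Shift `f` so that its sparse representation is centred at `0`: `g = f (X + b) = ∑ αᵢ (X + cᵢ)^d`
has at most `l` nonzero coefficients, and its coefficient of `X^(d-m)` is `(d choose m) μ m` with
`μ m = ∑ αᵢ cᵢ^m`. Hence at least `d + 1 - l` of the moments `μ 0 ≠ 0, μ 1, …, μ d` vanish.
Grouping the nodes by `|cᵢ|`, the even and the odd moments are power sums `∑ γᵥ v^m` over positive
bases `v`, and by Rolle's theorem (applied to `t ↦ ∑ γᵥ exp (t log v)`) such a sum with `n` nonzero
terms has fewer than `n` zeros. If both power sums are empty, `g` is a multiple of `X^d`. If only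
one is, each base of the other carries two nodes `±v`, so it has at most `k / 2` terms; counting
the zeros among the even and the odd `m` then gives `d + 3 ≤ 2 (k + l)`.
-/

open Finset Real

theorem exists_card_le_card_zeros_deriv_add_one {g : ℝ → ℝ} (hg : Differentiable ℝ g)
    (T : Finset ℝ) (hT : ∀ t ∈ T, g t = 0) :
    ∃ T' : Finset ℝ, (∀ t ∈ T', deriv g t = 0) ∧ #T ≤ #T' + 1 := by
  have hRolle (x y : ℝ) : ∃ z, x < y → g x = g y → z ∈ Set.Ioo x y ∧ deriv g z = 0 := by
    by_cases hxy : x < y ∧ g x = g y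
    · obtain ⟨z, hz, hz'⟩ := exists_deriv_eq_zero hxy.1 hg.continuous.continuousOn hxy.2
      exact ⟨z, fun _ _ => ⟨hz, hz'⟩⟩
    · exact ⟨0, fun h h' => absurd ⟨h, h'⟩ hxy⟩
  choose z hz using hRolle
  have hzero {x y : ℝ} (hx : x ∈ T) (hy : y ∈ T) (hxy : x < y) :=
    hz x y hxy ((hT x hx).trans (hT y hy).symm)
  refine ⟨{p ∈ T ×ˢ T | p.1 < p.2}.image fun p => z p.1 p.2, ?_,
    card_le_of_interleaved fun x hx y hy hxy _ => ⟨z x y, ?_, (hzero hx hy hxy).1⟩⟩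
  · simp only [mem_image, mem_filter, mem_product, Prod.exists]
    rintro _ ⟨x, y, ⟨⟨hx, hy⟩, hxy⟩, rfl⟩
    exact (hzero hx hy hxy).2
  · exact mem_image.2 ⟨(x, y), by simp [hx, hy, hxy], rfl⟩

theorem card_lt_card_of_sum_mul_exp_eq_zero {ι : Type*} {S : Finset ι}
    (hS : S.Nonempty) {γ r : ι → ℝ} (hγ : ∀ i ∈ S, γ i ≠ 0) (hr : Set.InjOn r S) {T : Finset ℝ}
    (hT : ∀ t ∈ T, ∑ i ∈ S, γ i * exp (r i * t) = 0) : #T < #S := by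
  classical
  induction S using Finset.induction_on generalizing γ r T with
  | empty => exact absurd hS (by simp)
  | insert a S ha ih =>
    rw [card_insert_of_notMem ha, Nat.lt_succ_iff]
    rcases S.eq_empty_or_nonempty with rfl | hS
    · refine (card_eq_zero.2 (eq_empty_of_forall_notMem fun t ht => ?_)).le
      simpa [hγ a (mem_insert_self a ∅), exp_ne_zero] using hT t ht
    set G : ℝ → ℝ := fun t => γ a + ∑ i ∈ S, γ i * exp ((r i - r a) * t)
    have hG' (t : ℝ) : HasDerivAt G (∑ i ∈ S, γ i * (r i - r a) * exp ((r i - r a) * t)) t := by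
      refine (HasDerivAt.fun_sum fun i _ => ?_).const_add (γ a)
      simpa [mul_comm, mul_assoc, mul_left_comm] using
        (((hasDerivAt_id t).const_mul (r i - r a)).exp).const_mul (γ i)
    -- `G` is the sum divided by its `a`-th exponential, so it has the same zeros.
    have hGT : ∀ t ∈ T, G t = 0 := fun t ht => by
      have : G t = exp (-(r a * t)) * ∑ i ∈ insert a S, γ i * exp (r i * t) := by
        rw [sum_insert ha, mul_add, mul_sum, mul_left_comm, ← exp_add, neg_add_cancel, exp_zero,
          mul_one]
        refine congrArg _ (sum_congr rfl fun i _ => ?_)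
        rw [mul_left_comm, ← exp_add]
        ring_nf
      rw [this, hT t ht, mul_zero]
    obtain ⟨T', hT', hTT'⟩ :=
      exists_card_le_card_zeros_deriv_add_one (fun t => (hG' t).differentiableAt) T hGT
    have hne (i) (hi : i ∈ S) : r i - r a ≠ 0 := sub_ne_zero.2 fun h =>
      ha (hr (mem_insert_of_mem hi) (mem_insert_self a S) h ▸ hi)
    have := ih hS (γ := fun i => γ i * (r i - r a)) (r := fun i => r i - r a)
      (fun i hi => mul_ne_zero (hγ i (mem_insert_of_mem hi)) (hne i hi))
      (fun i hi j hj h => hr (mem_insert_of_mem hi) (mem_insert_of_mem hj) (sub_left_inj.1 h))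
      (T := T') fun t ht => (hG' t).deriv ▸ hT' t ht
    omega

theorem card_lt_card_of_sum_mul_pow_eq_zero {S : Finset ℝ} (hS : S.Nonempty) {γ : ℝ → ℝ}
    (hγ : ∀ v ∈ S, γ v ≠ 0) (hpos : ∀ v ∈ S, 0 < v) {T : Finset ℕ}
    (hT : ∀ m ∈ T, ∑ v ∈ S, γ v * v ^ m = 0) : #T < #S := by
  rw [← card_image_of_injective T (Nat.cast_injective (R := ℝ))]
  refine card_lt_card_of_sum_mul_exp_eq_zero hS hγ (r := log)
    (fun v hv w hw h => log_injOn_pos (hpos v hv) (hpos w hw) h) ?_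
  simp only [mem_image, forall_exists_index, and_imp, forall_apply_eq_imp_iff₂]
  intro m hm
  rw [← hT m hm]
  refine sum_congr rfl fun v hv => ?_
  rw [← rpow_def_of_pos (hpos v hv), rpow_natCast]

section EffectiveBases

variable {ι : Type*}

noncomputable def effectiveBases (I : Finset ι) (w s : ι → ℝ) : Finset ℝ :=
  {v ∈ I.image s | ∑ i ∈ I with s i = v, w i ≠ 0}

theorem sum_mul_pow_eq_sum_effectiveBases (I : Finset ι) (w s : ι → ℝ) (m : ℕ) :
    ∑ i ∈ I, w i * s i ^ m =
      ∑ v ∈ effectiveBases I w s, (∑ i ∈ I with s i = v, w i) * v ^ m := by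
  rw [effectiveBases, sum_filter_of_ne fun v _ hv => left_ne_zero_of_mul hv,
    ← sum_fiberwise_of_maps_to (fun i hi => mem_image_of_mem s hi)]
  refine sum_congr rfl fun v _ => ?_
  rw [sum_mul]
  exact sum_congr rfl fun i hi => by rw [(mem_filter.1 hi).2]

theorem card_effectiveBases_le (I : Finset ι) (w s : ι → ℝ) : #(effectiveBases I w s) ≤ #I :=
  (card_filter_le _ _).trans card_image_le

theorem card_lt_card_effectiveBases {I : Finset ι} {w s : ι → ℝ} (hs : ∀ i ∈ I, 0 < s i)
    (hV : (effectiveBases I w s).Nonempty) {T : Finset ℕ}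
    (hT : ∀ m ∈ T, ∑ i ∈ I, w i * s i ^ m = 0) : #T < #(effectiveBases I w s) := by
  refine card_lt_card_of_sum_mul_pow_eq_zero hV (fun v hv => (mem_filter.1 hv).2)
    (fun v hv => ?_) fun m hm => by rw [← sum_mul_pow_eq_sum_effectiveBases, hT m hm]
  obtain ⟨i, hi, rfl⟩ := mem_image.1 (mem_filter.1 hv).1
  exact hs i hi

-- A singleton fibre is effective for both weights or for neither, so every base counted here
-- carries at least two indices.
theorem two_mul_card_effectiveBases_sdiff_le {I : Finset ι} {w₁ w₂ : ι → ℝ} (s : ι → ℝ)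
    (h : ∀ i ∈ I, w₁ i = 0 ↔ w₂ i = 0) :
    2 * #(effectiveBases I w₁ s \ effectiveBases I w₂ s) ≤ #I := by
  calc 2 * #(effectiveBases I w₁ s \ effectiveBases I w₂ s)
      ≤ #{i ∈ I | s i ∈ effectiveBases I w₁ s \ effectiveBases I w₂ s} :=
        mul_card_image_le_card_of_maps_to (fun i hi => (mem_filter.1 hi).2) 2 fun v hv => ?_
    _ ≤ #I := card_filter_le _ _
  obtain ⟨hv₁, hv₂⟩ := mem_sdiff.1 hv
  obtain ⟨hvI, hw₁⟩ := mem_filter.1 hv₁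
  have hw₂ : ∑ i ∈ I with s i = v, w₂ i = 0 :=
    by_contra fun hw₂ => hv₂ (mem_filter.2 ⟨hvI, hw₂⟩)
  rw [filter_filter]
  have hfiber : {i ∈ I | s i ∈ effectiveBases I w₁ s \ effectiveBases I w₂ s ∧ s i = v} =
      {i ∈ I | s i = v} := filter_congr fun i _ => and_iff_right_of_imp fun h => h ▸ hv
  rw [hfiber]
  by_contra! hcard
  obtain ⟨i, hi⟩ := nonempty_of_sum_ne_zero hw₁
  have hsingle : {i ∈ I | s i = v} = {i} := eq_singleton_iff_unique_mem.2
    ⟨hi, fun j hj => card_le_one.1 (Nat.lt_succ_iff.1 hcard) j hj i hi⟩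
  rw [hsingle, sum_singleton] at hw₁ hw₂
  exact hw₁ ((h i (mem_filter.1 hi).1).2 hw₂)

end EffectiveBases

theorem Odd.sign_mul_abs_pow {m : ℕ} (hm : Odd m) (x : ℝ) :
    (SignType.sign x : ℝ) * |x| ^ m = x ^ m := by
  conv_rhs => rw [← sign_mul_abs x]
  rw [mul_pow]
  congr 1
  rcases SignType.sign x with _ | _ | _ <;> simp [hm.neg_one_pow, hm.pos.ne']

section WeightedPowerSum

variable {ι : Type*} [Fintype ι]

def weightedPowerSum {R : Type*} [CommSemiring R] (α c : ι → R) (m : ℕ) : R := ∑ i, α i * c i ^ m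

theorem weightedPowerSum_of_even {α c : ι → ℝ} {m : ℕ} (hm : Even m) (hm₀ : m ≠ 0) :
    weightedPowerSum α c m = ∑ i with c i ≠ 0, α i * |c i| ^ m := by
  rw [weightedPowerSum, sum_filter_of_ne (p := fun i => c i ≠ 0) fun i _ h hc =>
    h (by rw [hc, abs_zero, zero_pow hm₀, mul_zero])]
  simp only [hm.pow_abs]

theorem weightedPowerSum_of_odd {α c : ι → ℝ} {m : ℕ} (hm : Odd m) :
    weightedPowerSum α c m = ∑ i with c i ≠ 0, α i * SignType.sign (c i) * |c i| ^ m := by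
  rw [weightedPowerSum, sum_filter_of_ne (p := fun i => c i ≠ 0) fun i _ h hc => h (by simp [hc])]
  simp only [mul_assoc, hm.sign_mul_abs_pow]

theorem card_filter_even_le {Z : Finset ℕ} {d : ℕ} (hZ : Z ⊆ range (d + 1)) (h0 : 0 ∉ Z) :
    #{m ∈ Z | Even m} ≤ d / 2 := by
  calc #{m ∈ Z | Even m} ≤ #((Icc 1 (d / 2)).image (2 * ·)) := card_le_card fun m hm => by
        obtain ⟨hmZ, j, rfl⟩ := mem_filter.1 hm
        have hj := mem_range.1 (hZ hmZ)
        have hj₀ := ne_of_mem_of_not_mem hmZ h0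
        exact mem_image.2 ⟨j, mem_Icc.2 ⟨by omega, by omega⟩, by ring⟩
    _ ≤ d / 2 := card_image_le.trans (by simp)

theorem card_filter_odd_le {Z : Finset ℕ} {d : ℕ} (hZ : Z ⊆ range (d + 1)) :
    #{m ∈ Z | ¬Even m} ≤ (d + 1) / 2 := by
  calc #{m ∈ Z | ¬Even m} ≤ #((range ((d + 1) / 2)).image (2 * · + 1)) :=
        card_le_card fun m hm => by
          obtain ⟨hmZ, hm⟩ := mem_filter.1 hm
          obtain ⟨j, rfl⟩ := Nat.not_even_iff_odd.1 hm
          have hj := mem_range.1 (hZ hmZ)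
          exact mem_image.2 ⟨j, mem_range.2 (by omega), rfl⟩
    _ ≤ (d + 1) / 2 := card_image_le.trans (by simp)

-- For `m ≠ 0`, `weightedPowerSum α c m` is a power sum in the `|cᵢ|` with weights `αᵢ` if `m` is
-- even and `αᵢ sign cᵢ` if `m` is odd (`weightedPowerSum_of_even`, `weightedPowerSum_of_odd`).
noncomputable def evenBases (α c : ι → ℝ) : Finset ℝ :=
  effectiveBases {i | c i ≠ 0} α (|c ·|)

noncomputable def oddBases (α c : ι → ℝ) : Finset ℝ :=
  effectiveBases {i | c i ≠ 0} (fun i => α i * SignType.sign (c i)) (|c ·|)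

theorem weightedPowerSum_eq_zero_of_evenBases_of_oddBases {α c : ι → ℝ}
    (hE : evenBases α c = ∅) (hO : oddBases α c = ∅) {m : ℕ} (hm : m ≠ 0) :
    weightedPowerSum α c m = 0 := by
  rcases Nat.even_or_odd m with he | ho
  · rw [weightedPowerSum_of_even he hm, sum_mul_pow_eq_sum_effectiveBases,
      show effectiveBases _ _ _ = ∅ from hE, sum_empty]
  · rw [weightedPowerSum_of_odd ho, sum_mul_pow_eq_sum_effectiveBases,
      show effectiveBases _ _ _ = ∅ from hO, sum_empty]

theorem card_lt_card_evenBases {α c : ι → ℝ} (hE : (evenBases α c).Nonempty) {T : Finset ℕ}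
    (hT : ∀ m ∈ T, Even m ∧ m ≠ 0 ∧ weightedPowerSum α c m = 0) : #T < #(evenBases α c) :=
  card_lt_card_effectiveBases (fun _ hi => abs_pos.2 (mem_filter.1 hi).2) hE fun m hm => by
    obtain ⟨he, hm₀, hz⟩ := hT m hm
    rwa [weightedPowerSum_of_even he hm₀] at hz

theorem card_lt_card_oddBases {α c : ι → ℝ} (hO : (oddBases α c).Nonempty) {T : Finset ℕ}
    (hT : ∀ m ∈ T, Odd m ∧ weightedPowerSum α c m = 0) : #T < #(oddBases α c) :=
  card_lt_card_effectiveBases (fun _ hi => abs_pos.2 (mem_filter.1 hi).2) hO fun m hm => by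
    obtain ⟨ho, hz⟩ := hT m hm
    rwa [weightedPowerSum_of_odd ho] at hz

theorem card_evenBases_le (α c : ι → ℝ) : #(evenBases α c) ≤ Fintype.card ι :=
  (card_effectiveBases_le _ _ _).trans (card_le_univ _)

theorem card_oddBases_le (α c : ι → ℝ) : #(oddBases α c) ≤ Fintype.card ι :=
  (card_effectiveBases_le _ _ _).trans (card_le_univ _)

theorem eq_zero_iff_mul_sign_eq_zero {α c : ι → ℝ} {i : ι}
    (hi : i ∈ ({i | c i ≠ 0} : Finset ι)) : α i = 0 ↔ α i * SignType.sign (c i) = 0 := by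
  have hs : (SignType.sign (c i) : ℝ) ≠ 0 := fun h =>
    (mem_filter.1 hi).2 (by simpa [h] using (sign_mul_abs (c i)).symm)
  exact (mul_eq_zero_iff_right hs).symm

theorem two_mul_card_evenBases_le {α c : ι → ℝ} (hO : oddBases α c = ∅) :
    2 * #(evenBases α c) ≤ Fintype.card ι := by
  have : 2 * #(evenBases α c \ oddBases α c) ≤ #({i | c i ≠ 0} : Finset ι) :=
    two_mul_card_effectiveBases_sdiff_le _ fun _ => eq_zero_iff_mul_sign_eq_zero
  rw [hO, sdiff_empty] at this
  exact this.trans (card_le_univ _)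

theorem two_mul_card_oddBases_le {α c : ι → ℝ} (hE : evenBases α c = ∅) :
    2 * #(oddBases α c) ≤ Fintype.card ι := by
  have : 2 * #(oddBases α c \ evenBases α c) ≤ #({i | c i ≠ 0} : Finset ι) :=
    two_mul_card_effectiveBases_sdiff_le _ fun _ hi => (eq_zero_iff_mul_sign_eq_zero hi).symm
  rw [hE, sdiff_empty] at this
  exact this.trans (card_le_univ _)

theorem weightedPowerSum_eq_zero_or_le (α c : ι → ℝ) (d l : ℕ) (h₀ : weightedPowerSum α c 0 ≠ 0)
    (hl : #{m ∈ range (d + 1) | weightedPowerSum α c m ≠ 0} ≤ l) :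
    (∀ m ≠ 0, weightedPowerSum α c m = 0) ∨ d + 3 ≤ 2 * (Fintype.card ι + l) := by
  by_cases hEO : evenBases α c = ∅ ∧ oddBases α c = ∅
  · exact Or.inl fun m => weightedPowerSum_eq_zero_of_evenBases_of_oddBases hEO.1 hEO.2
  right
  set Z := {m ∈ range (d + 1) | weightedPowerSum α c m = 0}
  have hZ₀ : 0 ∉ Z := fun h => h₀ (mem_filter.1 h).2
  have hZE : #{m ∈ Z | Even m} ≤ d / 2 := card_filter_even_le (filter_subset _ _) hZ₀
  have hZO : #{m ∈ Z | ¬Even m} ≤ (d + 1) / 2 := card_filter_odd_le (filter_subset _ _)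
  have hZ : #{m ∈ Z | Even m} + #{m ∈ Z | ¬Even m} = #Z := card_filter_add_card_filter_not _
  have hZl : #Z + #{m ∈ range (d + 1) | weightedPowerSum α c m ≠ 0} = d + 1 :=
    (card_filter_add_card_filter_not _).trans (card_range _)
  have hE (h : 0 < #(evenBases α c)) : #{m ∈ Z | Even m} < #(evenBases α c) :=
    card_lt_card_evenBases (card_pos.1 h) fun m hm => by
      obtain ⟨hmZ, he⟩ := mem_filter.1 hm
      exact ⟨he, ne_of_mem_of_not_mem hmZ hZ₀, (mem_filter.1 hmZ).2⟩
  have hO (h : 0 < #(oddBases α c)) : #{m ∈ Z | ¬Even m} < #(oddBases α c) :=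
    card_lt_card_oddBases (card_pos.1 h) fun m hm => by
      obtain ⟨hmZ, ho⟩ := mem_filter.1 hm
      exact ⟨Nat.not_even_iff_odd.1 ho, (mem_filter.1 hmZ).2⟩
  have hE₂ (h : #(oddBases α c) = 0) := two_mul_card_evenBases_le (card_eq_zero.1 h)
  have hO₂ (h : #(evenBases α c) = 0) := two_mul_card_oddBases_le (card_eq_zero.1 h)
  have := card_evenBases_le α c
  have := card_oddBases_le α c
  rw [← card_eq_zero, ← card_eq_zero] at hEO
  omega

end WeightedPowerSum

theorem coeff_sum_C_mul_X_add_C_pow {ι R : Type*} [Fintype ι] [CommRing R] (α c : ι → R)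
    (d n : ℕ) :
    (∑ i, C (α i) * (X + C (c i)) ^ d).coeff n = d.choose n * weightedPowerSum α c (d - n) := by
  simp only [finsetSum_coeff, coeff_C_mul, coeff_X_add_C_pow, weightedPowerSum, mul_sum]
  exact sum_congr rfl fun i _ => by ring

theorem sum_C_mul_X_add_C_pow_eq_C_mul_X_pow {ι : Type*} [Fintype ι] {α c : ι → ℝ} (d : ℕ)
    (h : ∀ m ≠ 0, weightedPowerSum α c m = 0) :
    ∑ i, C (α i) * (X + C (c i)) ^ d = C (weightedPowerSum α c 0) * X ^ d := by
  ext n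
  rw [coeff_sum_C_mul_X_add_C_pow, coeff_C_mul_X_pow]
  rcases lt_trichotomy n d with hn | rfl | hn
  · rw [h _ (by omega), if_neg hn.ne, mul_zero]
  · simp
  · rw [Nat.choose_eq_zero_of_lt hn, if_neg hn.ne', Nat.cast_zero, zero_mul]

theorem card_support_sum_C_mul_X_pow_le {ι R : Type*} [Semiring R] (s : Finset ι) (β : ι → R)
    (e : ι → ℕ) : #(∑ j ∈ s, C (β j) * X ^ e j).support ≤ #s := by
  refine (card_le_card fun n hn => ?_).trans (card_image_le (f := e))
  rw [mem_support_iff, finsetSum_coeff] at hn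
  obtain ⟨j, hj, hne⟩ := exists_ne_zero_of_sum_ne_zero hn
  rw [coeff_C_mul_X_pow] at hne
  exact mem_image.2 ⟨j, hj, (ite_ne_right_iff.1 hne).1.symm⟩

theorem card_weightedPowerSum_ne_zero_le_card_support {ι : Type*} [Fintype ι] (α c : ι → ℝ)
    (d : ℕ) : #{m ∈ range (d + 1) | weightedPowerSum α c m ≠ 0} ≤
      #(∑ i, C (α i) * (X + C (c i)) ^ d).support := by
  refine card_le_card_of_injOn (d - ·) (fun m hm => ?_) fun m hm m' hm' h => ?_
  · obtain ⟨hmd, hm⟩ := mem_filter.1 (mem_coe.1 hm)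
    have hmd : m ≤ d := Nat.lt_succ_iff.1 (mem_range.1 hmd)
    simp only [mem_coe, mem_support_iff, coeff_sum_C_mul_X_add_C_pow, Nat.sub_sub_self hmd]
    exact mul_ne_zero (Nat.cast_ne_zero.2 (Nat.choose_pos (by omega)).ne') hm
  · have := mem_range.1 (mem_filter.1 (mem_coe.1 hm)).1
    have := mem_range.1 (mem_filter.1 (mem_coe.1 hm')).1
    simp only at h
    omega

theorem exists_eq_sum_C_mul_X_add_C_pow {K : Type*} [Field K] [CharZero K] {f : K[X]} {d : ℕ}
    (hf : f.natDegree ≤ d) {c : Fin (d + 1) → K} (hc : Function.Injective c) :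
    ∃ α : Fin (d + 1) → K, f = ∑ i, C (α i) * (X + C (c i)) ^ d := by
  set M := Matrix.vandermonde c
  have hM : IsUnit M.det := isUnit_iff_ne_zero.2 (Matrix.det_vandermonde_ne_zero_iff.2 hc)
  set v : Fin (d + 1) → K := fun m => f.coeff (d - m) / d.choose (d - m)
  set α := Matrix.vecMul v M⁻¹
  have hα (m : Fin (d + 1)) : weightedPowerSum α c m = v m := by
    have hv : Matrix.vecMul α M = v := by
      rw [Matrix.vecMul_vecMul, Matrix.nonsing_inv_mul M hM, Matrix.vecMul_one]
    rw [← hv]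
    simp [weightedPowerSum, Matrix.vecMul, dotProduct, M, Matrix.vandermonde_apply]
  refine ⟨α, ext fun n => ?_⟩
  rw [coeff_sum_C_mul_X_add_C_pow]
  rcases le_or_gt n d with hn | hn
  · have := hα ⟨d - n, by omega⟩
    simp only [Nat.sub_sub_self hn, v] at this
    rw [this, mul_div_cancel₀ _ (Nat.cast_ne_zero.2 (Nat.choose_pos hn).ne')]
  · rw [coeff_eq_zero_of_natDegree_lt (hf.trans_lt hn), Nat.choose_eq_zero_of_lt hn,
      Nat.cast_zero, zero_mul]

theorem waringRank_spec {K : Type*} [Field K] [CharZero K] (f : K[X]) :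
    ∃ α a : Fin (waringRank f) → K,
      f = ∑ i, C (α i) * (X - C (a i)) ^ f.natDegree := by
  show waringRank f ∈ {s | ∃ α a : Fin s → K, f = ∑ i, C (α i) * (X - C (a i)) ^ f.natDegree}
  obtain ⟨α, hα⟩ := exists_eq_sum_C_mul_X_add_C_pow le_rfl
    (c := fun i : Fin (f.natDegree + 1) => (i : K)) fun i j h => Fin.ext (Nat.cast_injective h)
  exact Nat.sInf_mem ⟨_, α, fun i => -(i : K), by simpa [sub_eq_add_neg] using hα⟩

theorem sparsestShift_spec {K : Type*} [Field K] (f : K[X]) :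
    ∃ (α : Fin (sparsestShift f) → K) (c : K) (e : Fin (sparsestShift f) → ℕ),
      f = ∑ i, C (α i) * (X - C c) ^ e i := by
  show sparsestShift f ∈
    {s | ∃ (α : Fin s → K) (c : K) (e : Fin s → ℕ), f = ∑ i, C (α i) * (X - C c) ^ e i}
  refine Nat.sInf_mem ⟨f.natDegree + 1, fun i => f.coeff i, 0, fun i => i, ?_⟩
  simpa [Fin.sum_univ_eq_sum_range (fun i => C (f.coeff i) * X ^ i)] using
    f.as_sum_range_C_mul_X_pow

theorem exists_eq_C_mul_X_sub_C_pow_or_le {ι κ : Type*} [Fintype ι] [Fintype κ] {f : ℝ[X]}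
    {d : ℕ} (hd : f.natDegree = d) (α a : ι → ℝ) (β : κ → ℝ) (b : ℝ) (e : κ → ℕ)
    (hW : f = ∑ i, C (α i) * (X - C (a i)) ^ d) (hS : f = ∑ j, C (β j) * (X - C b) ^ e j) :
    (∃ α c : ℝ, f = C α * (X - C c) ^ d) ∨ d + 3 ≤ 2 * (Fintype.card ι + Fintype.card κ) := by
  rcases eq_or_ne f 0 with rfl | hf
  · exact Or.inl ⟨0, 0, by simp⟩
  set g := f.comp (X + C b)
  have hfg : f = g.comp (X - C b) := by simp [g, comp_assoc]
  have hgW : g = ∑ i, C (α i) * (X + C (b - a i)) ^ d := by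
    simp only [g, hW, Polynomial.sum_comp, mul_comp, C_comp, pow_comp, sub_comp, X_comp, C_sub,
      add_sub_assoc]
  have hgS : g = ∑ j, C (β j) * X ^ e j := by
    simp [g, hS, Polynomial.sum_comp]
  have h₀ : weightedPowerSum α (b - a ·) 0 ≠ 0 := by
    have hgd : g.natDegree = d := by simp [g, natDegree_comp, hd]
    have hg : g.leadingCoeff = f.leadingCoeff := by simp [g, leadingCoeff_comp]
    have := leadingCoeff_ne_zero.2 hf
    rwa [← hg, leadingCoeff, hgd, hgW, coeff_sum_C_mul_X_add_C_pow, Nat.choose_self, Nat.sub_self,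
      Nat.cast_one, one_mul] at this
  have hl : #{m ∈ range (d + 1) | weightedPowerSum α (b - a ·) m ≠ 0} ≤ Fintype.card κ :=
    (card_weightedPowerSum_ne_zero_le_card_support α _ d).trans
      (hgW ▸ hgS ▸ card_support_sum_C_mul_X_pow_le univ β e)
  refine (weightedPowerSum_eq_zero_or_le α _ d _ h₀ hl).imp_left fun h =>
    ⟨weightedPowerSum α (b - a ·) 0, b, ?_⟩
  rw [hfg, hgW, sum_C_mul_X_add_C_pow_eq_C_mul_X_pow d h]
  simp

theorem stmt11_general (f : Polynomial ℝ) (d : ℕ) (hd : f.natDegree = d) :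
    (∃ α c : ℝ, f = C α * (X - C c) ^ d) ∨
      ((d : ℝ) + 3) / 2 ≤ (waringRank f : ℝ) + (sparsestShift f : ℝ) := by
  obtain ⟨α, a, hW⟩ := waringRank_spec f
  obtain ⟨β, b, e, hS⟩ := sparsestShift_spec f
  rw [hd] at hW
  refine (exists_eq_C_mul_X_sub_C_pow_or_le hd α a β b e hW hS).imp_right fun h => ?_
  rw [Fintype.card_fin, Fintype.card_fin] at h
  rw [div_le_iff₀ two_pos]
  exact_mod_cast (by omega : d + 3 ≤ (waringRank f + sparsestShift f) * 2)

theorem stmt11 (f : Polynomial ℝ) (d : ℕ) (hd : f.natDegree = d) (hd1 : 1 ≤ d) :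
    (∃ α c : ℝ, f = C α * (X - C c) ^ d) ∨
      ((d : ℝ) + 3) / 2 ≤ (waringRank f : ℝ) + (sparsestShift f : ℝ) :=
  stmt11_general f d hd
end
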